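/- Let n ≥ 5 and let F be a 5-antichain saturated family of subsets of [n]. Then there is no i with 1 ≤ i ≤ n − 1 such that F contains exactly two sets of size i. -/

import Mathlib

open Finset

/-- A family `F` of finite subsets of ℕ contains a `k`-antichain: there are `k` sets in `F`
that are pairwise incomparable under inclusion. -/
def ContainsAntichain (k : ℕ) (F : Finset (Finset ℕ)) : Prop :=
  ∃ S ⊆ F, S.card = k ∧ ∀ A ∈ S, ∀ B ∈ S, A ≠ B → ¬ A ⊆ B

/-- `F` is a `k`-antichain saturated family of subsets of `[n] = {1, …, n}`:
all members are subsets of `[n]`, `F` contains no `k`-antichain, but adding any new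
subset of `[n]` creates a `k`-antichain. -/
def IsAntichainSaturated (n k : ℕ) (F : Finset (Finset ℕ)) : Prop :=
  (∀ A ∈ F, A ⊆ Finset.Icc 1 n) ∧
  ¬ ContainsAntichain k F ∧
  ∀ X ⊆ Finset.Icc 1 n, X ∉ F → ContainsAntichain k (insert X F)

/-!
A family without 5-antichains is, by Dilworth's theorem, a union of four chains, and every
4-antichain of the family meets all four. Saturation puts, for each missing set `X`, a 4-antichain
of sets incomparable with `X` into the family; so a set comparable with every member of one chain
already belongs to the family. If level `i` consists of exactly `A` and `B`, the two chains missing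
`A` and `B` have no set of size `i`, and every `i`-set squeezed between the top `L` of such a chain
below level `i` and its bottom `U` above level `i` is `A` or `B`. Counting these sets forces
`|U \ L| = 2`, `A ∩ B = L` and `A ∪ B = U`, where `L = ∅` and `U = [n]` when the chain has nothing
below, resp. above, level `i`. Disjoint chains cannot share `A ∩ B` or `A ∪ B`, so `A ∩ B = ∅` and
`A ∪ B = [n]`, whence `n = 2`.
-/

section Dilworth

variable {α : Type*} [PartialOrder α]

/-- The color classes `{x ∈ s | f x = j}`, `j < k`, partition `s` into at most `k` chains. -/
def IsChainColoring (s : Finset α) (k : ℕ) (f : α → ℕ) : Prop :=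
  (∀ x ∈ s, f x < k) ∧ ∀ x ∈ s, ∀ y ∈ s, f x = f y → x ≤ y ∨ y ≤ x

def MemAntichainOfCard (s : Finset α) (k : ℕ) (x : α) : Prop :=
  ∃ u ⊆ s, IsAntichain (· ≤ ·) (u : Set α) ∧ #u = k ∧ x ∈ u

def IsColorClassTop (s : Finset α) (k : ℕ) (f : α → ℕ) (j : ℕ) (m : α) : Prop :=
  MemAntichainOfCard s k m ∧ f m = j ∧ ∀ x ∈ s, MemAntichainOfCard s k x → f x = j → x ≤ m

variable {s t : Finset α} {k : ℕ} {f : α → ℕ}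

lemma IsChainColoring.exists_mem_eq (hf : IsChainColoring s k f) (hts : t ⊆ s)
    (ht : IsAntichain (· ≤ ·) (t : Set α)) (hkt : k ≤ #t) {j : ℕ} (hj : j < k) :
    ∃ x ∈ t, f x = j := by
  have hinj : Set.InjOn f t := fun x hx y hy hxy => by
    rcases hf.2 x (hts hx) y (hts hy) hxy with h | h
    exacts [ht.eq hx hy h, (ht.eq hy hx h).symm]
  have himage : t.image f = range k := by
    refine eq_of_subset_of_card_le (fun _ hy => ?_) ?_
    · obtain ⟨x, hx, rfl⟩ := mem_image.1 hy
      exact mem_range.2 (hf.1 x (hts hx))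
    · rwa [card_image_of_injOn hinj, card_range]
  have hjt : j ∈ t.image f := himage ▸ mem_range.2 hj
  simpa using hjt

lemma exists_isChainColoring_of_sdiff_chain [DecidableEq α] {K : Finset α}
    (hK : IsChain (· ≤ ·) (K : Set α)) (hf : IsChainColoring (s \ K) k f) :
    ∃ g, IsChainColoring s (k + 1) g := by
  refine ⟨fun x => if x ∈ K then k else f x, fun x hx => ?_, fun x hx y hy hxy => ?_⟩
  · dsimp only
    split_ifs with hxK
    · exact k.lt_succ_self
    · exact (hf.1 x (mem_sdiff.2 ⟨hx, hxK⟩)).trans k.lt_succ_self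
  · dsimp only at hxy
    by_cases hxK : x ∈ K <;> by_cases hyK : y ∈ K <;>
      simp only [hxK, hyK, if_true, if_false] at hxy
    · exact hK.total hxK hyK
    · exact absurd hxy (hf.1 y (mem_sdiff.2 ⟨hy, hyK⟩)).ne'
    · exact absurd hxy (hf.1 x (mem_sdiff.2 ⟨hx, hxK⟩)).ne
    · exact hf.2 x (mem_sdiff.2 ⟨hx, hxK⟩) y (mem_sdiff.2 ⟨hy, hyK⟩) hxy

lemma IsChainColoring.exists_isColorClassTop (hf : IsChainColoring s k f) (hts : t ⊆ s)
    (ht : IsAntichain (· ≤ ·) (t : Set α)) (htk : #t = k) {j : ℕ} (hj : j < k) :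
    ∃ m, IsColorClassTop s k f j m := by
  classical
  set c := s.filter fun x => MemAntichainOfCard s k x ∧ f x = j
  obtain ⟨x, hxt, hxj⟩ := hf.exists_mem_eq hts ht htk.ge hj
  obtain ⟨m, hm⟩ :=
    exists_maximal (s := c) ⟨x, mem_filter.2 ⟨hts hxt, ⟨t, hts, ht, htk, hxt⟩, hxj⟩⟩
  obtain ⟨hms, hmk, hmj⟩ := mem_filter.1 hm.1
  refine ⟨m, hmk, hmj, fun y hy hyk hyj => ?_⟩
  have hyc : y ∈ c := mem_filter.2 ⟨hy, hyk, hyj⟩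
  exact (hf.2 y hy m hms (hyj.trans hmj.symm)).elim id (hm.2 hyc)

lemma IsChainColoring.isAntichain_image_isColorClassTop [DecidableEq α]
    (hf : IsChainColoring s k f) {m : ℕ → α} (hm : ∀ j < k, IsColorClassTop s k f j (m j)) :
    IsAntichain (· ≤ ·) (((range k).image m : Finset α) : Set α) := by
  rintro _ hx _ hy hne hle
  obtain ⟨i, hi, rfl⟩ := mem_image.1 hx
  obtain ⟨j, hj, rfl⟩ := mem_image.1 hy
  obtain ⟨⟨u, hus, hu, huk, hju⟩, hmj, -⟩ := hm j (mem_range.1 hj)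
  obtain ⟨w, hwu, hwi⟩ := hf.exists_mem_eq hus hu huk.ge (mem_range.1 hi)
  have hwm : w ≤ m i := (hm i (mem_range.1 hi)).2.2 w (hus hwu) ⟨u, hus, hu, huk, hwu⟩ hwi
  have hwj : w = m j := hu.eq hwu hju (hwm.trans hle)
  have hij : i = j := by rw [← hwi, hwj, hmj]
  exact hne (by rw [hij])

lemma exists_isColorClassTop_le_of_maximal [DecidableEq α] {a : α} (ha : Maximal (· ∈ s) a)
    (hw : ∀ t ⊆ s, IsAntichain (· ≤ ·) (t : Set α) → #t ≤ k)
    (hf : IsChainColoring (s.erase a) k f) {m : ℕ → α}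
    (hm : ∀ j < k, IsColorClassTop (s.erase a) k f j (m j)) :
    ∃ j < k, m j ≤ a := by
  set M := (range k).image m
  have hMs : M ⊆ s.erase a := by
    intro x hx
    obtain ⟨j, hj, rfl⟩ := mem_image.1 hx
    obtain ⟨u, hus, -, -, hju⟩ := (hm j (mem_range.1 hj)).1
    exact hus hju
  have hMk : #M = k := by
    rw [card_image_of_injOn, card_range]
    intro i hi j hj hij
    rw [← (hm i (mem_range.1 hi)).2.1, ← (hm j (mem_range.1 hj)).2.1, hij]
  by_contra! h
  have haM : a ∉ M := fun haM => (mem_erase.1 (hMs haM)).1 rfl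
  have hMa : IsAntichain (· ≤ ·) ((insert a M : Finset α) : Set α) := by
    rw [coe_insert]
    refine (hf.isAntichain_image_isColorClassTop hm).insert (fun b hb _ hba => ?_)
      (fun b hb _ hab => ?_)
    · obtain ⟨i, hi, rfl⟩ := mem_image.1 hb
      exact h i (mem_range.1 hi) hba
    · obtain ⟨i, hi, rfl⟩ := mem_image.1 hb
      exact h i (mem_range.1 hi) (ha.2 (mem_of_mem_erase (hMs hb)) hab)
  have := hw _ (insert_subset ha.1 (hMs.trans (erase_subset a s))) hMa
  rw [card_insert_of_notMem haM, hMk] at this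
  omega

/-- Galvin's inductive step for Dilworth's theorem: `K` is `a` together with the part of one
color class below the largest member, in that class, of a `(k + 1)`-antichain of `s.erase a`. -/
lemma exists_chain_sdiff_card_le [DecidableEq α] {a : α} (ha : Maximal (· ∈ s) a)
    (hw : ∀ t ⊆ s, IsAntichain (· ≤ ·) (t : Set α) → #t ≤ k + 1)
    (hf : IsChainColoring (s.erase a) (k + 1) f) :
    ∃ K ⊆ s, a ∈ K ∧ IsChain (· ≤ ·) (K : Set α) ∧
      ∀ t ⊆ s \ K, IsAntichain (· ≤ ·) (t : Set α) → #t ≤ k := by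
  classical
  by_cases hsmall : ∀ t ⊆ s.erase a, IsAntichain (· ≤ ·) (t : Set α) → #t ≤ k
  · refine ⟨{a}, singleton_subset_iff.2 ha.1, mem_singleton_self a, ?_, ?_⟩
    · simp
    · rwa [sdiff_singleton_eq_erase]
  push Not at hsmall
  obtain ⟨t₀, ht₀s, ht₀, ht₀k⟩ := hsmall
  have hwide : ∀ t ⊆ s.erase a, IsAntichain (· ≤ ·) (t : Set α) → k < #t → #t = k + 1 :=
    fun t hts ht hkt => le_antisymm (hw t (hts.trans (erase_subset a s)) ht) hkt
  have htop : ∀ j, ∃ m, j < k + 1 → IsColorClassTop (s.erase a) (k + 1) f j m := fun j =>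
    if hj : j < k + 1 then
      (hf.exists_isColorClassTop ht₀s ht₀ (hwide t₀ ht₀s ht₀ ht₀k) hj).imp fun _ h _ => h
    else ⟨a, fun h => absurd h hj⟩
  choose m hm using htop
  obtain ⟨j, hj, hja⟩ := exists_isColorClassTop_le_of_maximal ha
    hw hf fun j hj => hm j hj
  refine ⟨insert a ((s.erase a).filter fun x => f x = j ∧ x ≤ m j),
    insert_subset ha.1 ((filter_subset _ _).trans (erase_subset a s)), mem_insert_self _ _, ?_, ?_⟩
  · rw [coe_insert]
    refine IsChain.insert (fun x hx y hy _ => ?_) (fun x hx _ => Or.inr ?_)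
    · obtain ⟨hxs, hxj, -⟩ := mem_filter.1 hx
      obtain ⟨hys, hyj, -⟩ := mem_filter.1 hy
      exact hf.2 x hxs y hys (hxj.trans hyj.symm)
    · exact (mem_filter.1 hx).2.2.trans hja
  · intro t hts ht
    by_contra! hkt
    have hts' : t ⊆ s.erase a := fun x hx => mem_erase.2
      ⟨fun hxa => (mem_sdiff.1 (hts hx)).2 (hxa ▸ mem_insert_self _ _), (mem_sdiff.1 (hts hx)).1⟩
    have htk := hwide t hts' ht hkt
    obtain ⟨w, hwt, hwj⟩ := hf.exists_mem_eq hts' ht htk.ge hj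
    have hwm : w ≤ m j := (hm j hj).2.2 w (hts' hwt) ⟨t, hts', ht, htk, hwt⟩ hwj
    exact (mem_sdiff.1 (hts hwt)).2 (mem_insert_of_mem (mem_filter.2 ⟨hts' hwt, hwj, hwm⟩))

theorem exists_isChainColoring (s : Finset α) (k : ℕ)
    (hw : ∀ t ⊆ s, IsAntichain (· ≤ ·) (t : Set α) → #t ≤ k) : ∃ f, IsChainColoring s k f := by
  classical
  induction s using Finset.strongInduction generalizing k with
  | H s ih =>
  rcases s.eq_empty_or_nonempty with rfl | hs
  · exact ⟨0, by simp [IsChainColoring]⟩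
  obtain ⟨a, ha⟩ := exists_maximal hs
  obtain ⟨k, rfl⟩ : ∃ k', k = k' + 1 := Nat.exists_eq_add_one_of_ne_zero (by
    rintro rfl
    simpa using hw {a} (singleton_subset_iff.2 ha.1) (by simp))
  obtain ⟨f, hf⟩ := ih (s.erase a) (erase_ssubset ha.1) (k + 1) fun t hts =>
    hw t (hts.trans (erase_subset a s))
  obtain ⟨K, hKs, haK, hK, hwK⟩ := exists_chain_sdiff_card_le ha hw hf
  obtain ⟨g, hg⟩ := ih (s \ K) (sdiff_ssubset hKs ⟨a, haK⟩) k hwK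
  exact exists_isChainColoring_of_sdiff_chain hK hg

end Dilworth

theorem Nat.le_choose_of_pos_of_lt {d r : ℕ} (hr : 0 < r) (hrd : r < d) : d ≤ d.choose r := by
  induction d generalizing r with
  | zero => omega
  | succ d ih =>
    obtain ⟨r, rfl⟩ := Nat.exists_eq_add_one_of_ne_zero hr.ne'
    rw [Nat.choose_succ_succ']
    rcases Nat.eq_zero_or_pos r with rfl | hr0
    · simp
    · have := ih hr0 (by omega)
      have := Nat.choose_pos (n := d) (k := r + 1) (by omega)
      omega

lemma IsChain.exists_greatest_or_eq {β : Type*} [PartialOrder β] {c : Finset β}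
    (hc : IsChain (· ≤ ·) (c : Set β)) (p : β → Prop) {d : β} (hd : p d) :
    ∃ L, (L ∈ c ∨ L = d) ∧ p L ∧ ∀ Y ∈ c, p Y → Y ≤ L := by
  classical
  rcases (c.filter p).eq_empty_or_nonempty with h | h
  · exact ⟨d, Or.inr rfl, hd, fun Y hY hpY => absurd (mem_filter.2 ⟨hY, hpY⟩) (h ▸ notMem_empty Y)⟩
  · obtain ⟨L, hL⟩ := exists_maximal h
    obtain ⟨hLc, hpL⟩ := mem_filter.1 hL.1
    exact ⟨L, Or.inl hLc, hpL, fun Y hY hpY =>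
      (hc.total hY hLc).elim id (hL.2 (mem_filter.2 ⟨hY, hpY⟩))⟩

section Slices

variable {α : Type*} [DecidableEq α]

theorem card_sdiff_eq_two_of_slice_subset_pair {A B L U : Finset α} {i : ℕ} (hLU : L ⊆ U)
    (hL : #L < i) (hU : i < #U) (hAB : ∀ X, L ⊆ X → X ⊆ U → #X = i → X = A ∨ X = B) :
    #(U \ L) = 2 := by
  have hD : #(U \ L) = #U - #L := card_sdiff_of_subset hLU
  have hslice : ∀ T ⊆ U \ L, #T = i - #L → L ∪ T = A ∨ L ∪ T = B := fun T hT hTi =>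
    hAB _ subset_union_left (union_subset hLU (hT.trans sdiff_subset)) (by
      rw [card_union_of_disjoint (disjoint_of_subset_right hT disjoint_sdiff)]; omega)
  have hcount : #((U \ L).powersetCard (i - #L)) ≤ #({A, B} : Finset (Finset α)) := by
    refine card_le_card_of_injOn (L ∪ ·) (fun T hT => ?_) (fun T₁ hT₁ T₂ hT₂ h => ?_)
    · obtain ⟨hTU, hTi⟩ := mem_powersetCard.1 hT
      rcases hslice T hTU hTi with h | h <;> simp [h]
    · have h₁ := (mem_powersetCard.1 hT₁).1
      have h₂ := (mem_powersetCard.1 hT₂).1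
      rw [← union_sdiff_cancel_left (disjoint_of_subset_right h₁ disjoint_sdiff),
        ← union_sdiff_cancel_left (disjoint_of_subset_right h₂ disjoint_sdiff)]
      exact congrArg (· \ L) h
  rw [card_powersetCard] at hcount
  have := Nat.le_choose_of_pos_of_lt (d := #(U \ L)) (r := i - #L) (by omega) (by omega)
  have := card_le_two (a := A) (b := B)
  omega

theorem inter_eq_and_union_eq_of_slice_subset_pair {A B L U : Finset α} {i : ℕ} (hLU : L ⊆ U)
    (hL : #L < i) (hU : i < #U) (hAB : ∀ X, L ⊆ X → X ⊆ U → #X = i → X = A ∨ X = B) :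
    A ∩ B = L ∧ A ∪ B = U ∧ #U = #L + 2 := by
  have hD2 := card_sdiff_eq_two_of_slice_subset_pair hLU hL hU hAB
  have hUL : #U = #L + 2 := by rw [card_sdiff_of_subset hLU] at hD2; omega
  obtain ⟨x, y, hxy, hxyU⟩ := card_eq_two.mp hD2
  have hxU : x ∈ U \ L := hxyU ▸ mem_insert_self x {y}
  have hyU : y ∈ U \ L := hxyU ▸ mem_insert_of_mem (mem_singleton_self y)
  have hslice : ∀ z ∈ U \ L, insert z L = A ∨ insert z L = B := fun z hz =>
    hAB _ (subset_insert z L) (insert_subset (mem_sdiff.1 hz).1 hLU) (by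
      rw [card_insert_of_notMem (mem_sdiff.1 hz).2]; omega)
  have hinter : insert x L ∩ insert y L = L := by
    ext z; simp only [mem_inter, mem_insert]
    constructor
    · rintro ⟨rfl | hzL, rfl | hzL⟩ <;> first | assumption | exact absurd rfl hxy
    · exact fun hzL => ⟨Or.inr hzL, Or.inr hzL⟩
  have hunion : insert x L ∪ insert y L = U := by
    rw [← union_sdiff_of_subset hLU, hxyU]
    ext z; simp only [mem_union, mem_insert, mem_singleton]; tauto
  have hxy' : insert x L ≠ insert y L := fun h => by
    have hx : x ∈ insert y L := h ▸ mem_insert_self x L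
    simp [(mem_sdiff.1 hxU).2, hxy] at hx
  obtain ⟨rfl, rfl⟩ | ⟨rfl, rfl⟩ :
      A = insert x L ∧ B = insert y L ∨ A = insert y L ∧ B = insert x L := by
    rcases hslice x hxU with h₁ | h₁ <;> rcases hslice y hyU with h₂ | h₂
    · exact absurd (h₁.trans h₂.symm) hxy'
    · exact Or.inl ⟨h₁.symm, h₂.symm⟩
    · exact Or.inr ⟨h₂.symm, h₁.symm⟩
    · exact absurd (h₁.trans h₂.symm) hxy'
  · exact ⟨hinter, hunion, hUL⟩
  · exact ⟨by rwa [inter_comm], by rwa [union_comm], hUL⟩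

theorem inter_union_of_isChain {A B V : Finset α} {c : Finset (Finset α)} {i : ℕ}
    (hc : IsChain (· ≤ ·) (c : Set (Finset α))) (hcV : ∀ Y ∈ c, Y ⊆ V) (hci : ∀ Y ∈ c, #Y ≠ i)
    (hi : 0 < i) (hiV : i < #V)
    (hAB : ∀ X ⊆ V, #X = i → (∀ Y ∈ c, Y ⊆ X ∨ X ⊆ Y) → X = A ∨ X = B) :
    (A ∩ B ∈ c ∨ A ∩ B = ∅) ∧ (A ∪ B ∈ c ∨ A ∪ B = V) ∧ #(A ∪ B) = #(A ∩ B) + 2 := by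
  obtain ⟨L, hLc, hLi, hL⟩ := hc.exists_greatest_or_eq (fun Y => #Y < i) (d := ∅) (by simpa)
  -- the bottom of `c` above level `i`, as the top of `c` in the order dual
  obtain ⟨U, hUc, hUi, hU⟩ : ∃ U : Finset α, (U ∈ c ∨ U = V) ∧ i < #U ∧ ∀ Y ∈ c, i < #Y → U ⊆ Y :=
    hc.symm.exists_greatest_or_eq (β := (Finset α)ᵒᵈ) (fun Y => i < #(OrderDual.ofDual Y)) hiV
  have hUV : U ⊆ V := hUc.elim (hcV U) (·.le)
  have hLU : L ⊆ U := by
    rcases hLc with hLc | rfl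
    · rcases hUc with hUc | rfl
      · exact (hc.total hLc hUc).resolve_right fun h => by have := card_le_card h; omega
      · exact hcV L hLc
    · exact empty_subset U
  obtain ⟨hinter, hunion, hcard⟩ := inter_eq_and_union_eq_of_slice_subset_pair hLU hLi hUi
    fun X hLX hXU hXi => hAB X (hXU.trans hUV) hXi fun Y hY => (lt_or_gt_of_ne (hci Y hY)).imp
      (fun h => (hL Y hY h).trans hLX) (fun h => hXU.trans (hU Y hY h))
  rw [hinter, hunion]
  exact ⟨hLc, hUc, hcard⟩

end Slices

lemma containsAntichain_iff {k : ℕ} {F : Finset (Finset ℕ)} :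
    ContainsAntichain k F ↔ ∃ S ⊆ F, #S = k ∧ IsAntichain (· ≤ ·) (S : Set (Finset ℕ)) :=
  Iff.rfl

lemma card_le_of_not_containsAntichain {k : ℕ} {F : Finset (Finset ℕ)}
    (h : ¬ ContainsAntichain (k + 1) F) :
    ∀ t ⊆ F, IsAntichain (· ≤ ·) (t : Set (Finset ℕ)) → #t ≤ k := by
  intro t htF ht
  by_contra! hkt
  obtain ⟨S, hSt, hS⟩ := exists_subset_card_eq hkt
  exact h ⟨S, hSt.trans htF, hS, ht.subset (coe_subset.2 hSt)⟩

namespace IsAntichainSaturated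

variable {n k : ℕ} {F : Finset (Finset ℕ)}

lemma exists_antichain_incomparable (hF : IsAntichainSaturated n (k + 1) F) {X : Finset ℕ}
    (hX : X ⊆ Icc 1 n) (hXF : X ∉ F) :
    ∃ S ⊆ F, IsAntichain (· ≤ ·) (S : Set (Finset ℕ)) ∧ #S = k ∧ ∀ Y ∈ S, ¬ Y ⊆ X ∧ ¬ X ⊆ Y := by
  obtain ⟨S, hSF, hSk, hS⟩ := containsAntichain_iff.1 (hF.2.2 X hX hXF)
  have hXS : X ∈ S := by
    by_contra hXS
    exact hF.2.1 ⟨S, by simpa [erase_eq_of_notMem hXS] using subset_insert_iff.1 hSF, hSk, hS⟩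
  refine ⟨S.erase X, subset_insert_iff.1 hSF, hS.subset (coe_subset.2 (erase_subset X S)),
    by rw [card_erase_of_mem hXS, hSk, Nat.add_sub_cancel], fun Y hY => ?_⟩
  have hYX := ne_of_mem_erase hY
  exact ⟨hS (mem_of_mem_erase hY) hXS hYX, hS hXS (mem_of_mem_erase hY) hYX.symm⟩

lemma mem_of_forall_comparable (hF : IsAntichainSaturated n (k + 1) F) {f : Finset ℕ → ℕ}
    (hf : IsChainColoring F k f) {j : ℕ} (hj : j < k) {X : Finset ℕ} (hX : X ⊆ Icc 1 n)
    (hcomp : ∀ Y ∈ F, f Y = j → Y ⊆ X ∨ X ⊆ Y) : X ∈ F := by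
  by_contra hXF
  obtain ⟨S, hSF, hS, hSk, hSX⟩ := hF.exists_antichain_incomparable hX hXF
  obtain ⟨Y, hYS, hYj⟩ := hf.exists_mem_eq hSF hS hSk.ge hj
  exact (hcomp Y (hSF hYS) hYj).elim (hSX Y hYS).1 (hSX Y hYS).2

theorem inter_union_of_level_eq_pair (hF : IsAntichainSaturated n (k + 1) F)
    {f : Finset ℕ → ℕ} (hf : IsChainColoring F k f) {A B : Finset ℕ} {i : ℕ}
    (hlevel : F.filter (fun Y => #Y = i) = {A, B}) (hi : 0 < i) (hin : i < n)
    {j : ℕ} (hj : j < k) (hA : f A ≠ j) (hB : f B ≠ j) :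
    (A ∩ B ∈ F ∧ f (A ∩ B) = j ∨ A ∩ B = ∅) ∧ (A ∪ B ∈ F ∧ f (A ∪ B) = j ∨ A ∪ B = Icc 1 n) ∧
      #(A ∪ B) = #(A ∩ B) + 2 := by
  have hlevel' : ∀ Y ∈ F, #Y = i → Y = A ∨ Y = B := fun Y hY hYi => by
    have hYAB : Y ∈ ({A, B} : Finset (Finset ℕ)) := hlevel ▸ mem_filter.2 ⟨hY, hYi⟩
    simpa using hYAB
  have := inter_union_of_isChain (c := F.filter (f · = j)) (V := Icc 1 n) (i := i)
    (fun Y hY Z hZ _ => hf.2 Y (mem_filter.1 hY).1 Z (mem_filter.1 hZ).1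
      ((mem_filter.1 hY).2.trans (mem_filter.1 hZ).2.symm))
    (fun Y hY => hF.1 Y (mem_filter.1 hY).1)
    (fun Y hY hYi => by
      rcases hlevel' Y (mem_filter.1 hY).1 hYi with rfl | rfl
      exacts [hA (mem_filter.1 hY).2, hB (mem_filter.1 hY).2])
    hi (by simpa using hin)
    (fun X hX hXi hcomp => hlevel' X (hF.mem_of_forall_comparable hf hj hX
      fun Y hY hYj => hcomp Y (mem_filter.2 ⟨hY, hYj⟩)) hXi)
  simpa only [mem_filter] using this

end IsAntichainSaturated

/-- For `n ≥ 5` and `F` a 5-antichain saturated family of subsets of `[n]`, no level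
`1 ≤ i ≤ n - 1` of `F` has exactly two sets. -/
theorem five_saturated_no_level_two (n : ℕ) (hn : 5 ≤ n) (F : Finset (Finset ℕ))
    (hF : IsAntichainSaturated n 5 F) :
    ¬ ∃ i, 1 ≤ i ∧ i ≤ n - 1 ∧ (F.filter fun A => A.card = i).card = 2 := by
  rintro ⟨i, hi, hin, hlevel⟩
  obtain ⟨A, B, -, hlevel⟩ := card_eq_two.1 hlevel
  obtain ⟨f, hf⟩ := exists_isChainColoring F 4 (card_le_of_not_containsAntichain hF.2.1)
  have hfree : 1 < #(range 4 \ {f A, f B}) := by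
    have hsdiff := le_card_sdiff {f A, f B} (range 4)
    rw [card_range] at hsdiff
    have := card_le_two (a := f A) (b := f B)
    omega
  obtain ⟨j₁, hj₁, j₂, hj₂, hj⟩ := one_lt_card.1 hfree
  simp only [mem_sdiff, mem_range, mem_insert, mem_singleton, not_or] at hj₁ hj₂
  obtain ⟨hI₁, hU₁, hcard⟩ := hF.inter_union_of_level_eq_pair hf hlevel (by omega) (by omega)
    hj₁.1 (Ne.symm hj₁.2.1) (Ne.symm hj₁.2.2)
  obtain ⟨hI₂, hU₂, -⟩ := hF.inter_union_of_level_eq_pair hf hlevel (by omega) (by omega)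
    hj₂.1 (Ne.symm hj₂.2.1) (Ne.symm hj₂.2.2)
  have hI : A ∩ B = ∅ := by
    rcases hI₁ with ⟨-, h₁⟩ | h₁ <;> rcases hI₂ with ⟨-, h₂⟩ | h₂
    exacts [absurd (h₁.symm.trans h₂) hj, h₂, h₁, h₁]
  have hU : A ∪ B = Icc 1 n := by
    rcases hU₁ with ⟨-, h₁⟩ | h₁ <;> rcases hU₂ with ⟨-, h₂⟩ | h₂
    exacts [absurd (h₁.symm.trans h₂) hj, h₂, h₁, h₁]
  rw [hI, hU, Nat.card_Icc, card_empty] at hcard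
  omega
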